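/- arXiv:1504.04338 — 4 statements merged into one kernel-verified Lean document; each statement's English description precedes it below -/
import Mathlib

section
/- Let 0 < r < s < 1, 0 < t < 1, and choose ε with r(1−t) < ε < min{r, s(1−t)}. Define a_k = (1 − k^{−1/ε}) e^{iθ_k}, θ_k = k^{−t/ε} + θ. Then ∑_k (1 − |a_k|)^r δ_{a_k} is NOT an r-Carleson measure; specifically, for arcs I centered at e^{iθ}, the quotient (1/|I|^r) ∑_{a_k ∈ S(I)} (1 − |a_k|)^r tends to ∞ as |I| → 0. -/
open Complex Real Classical

/-- The Carleson box over the arc of the unit circle centered at `e^{iθ₀}` of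
arclength `ℓ`. -/
noncomputable def carlesonBox (θ₀ ℓ : ℝ) : Set ℂ :=
  {z | ∃ ρ φ : ℝ, 1 - ℓ / (2 * Real.pi) < ρ ∧ ρ < 1 ∧
    θ₀ - ℓ / 2 < φ ∧ φ < θ₀ + ℓ / 2 ∧ z = (ρ : ℂ) * Complex.exp ((φ : ℂ) * Complex.I)}

/-- with a_k = (1 - k^{-1/ε}) e^{iθ_k}, θ_k = k^{-t/ε} + θ,
the measure ∑_k (1-|a_k|)^r δ_{a_k} is not an r-Carleson measure: for arcs I
centered at e^{iθ}, |I|^{-r} ∑_{a_k ∈ S(I)} (1-|a_k|)^r → ∞ as |I| → 0. -/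
theorem stmt_2 (r s t ε θ : ℝ) (hr : 0 < r) (hrs : r < s) (hs : s < 1)
    (ht0 : 0 < t) (ht1 : t < 1)
    (hε1 : r * (1 - t) < ε) (hε2 : ε < min r (s * (1 - t)))
    (a : ℕ → ℂ)
    (ha : ∀ k : ℕ, 1 ≤ k →
      a k = ((1 - (k : ℝ) ^ (-(1 / ε)) : ℝ) : ℂ) *
        Complex.exp ((((k : ℝ) ^ (-(t / ε)) + θ : ℝ) : ℂ) * Complex.I)) :
    Filter.Tendsto
      (fun ℓ : ℝ => (1 / ℓ ^ r) *
        ∑' k : ℕ, (if a (k + 1) ∈ carlesonBox θ ℓ then (1 - ‖a (k + 1)‖) ^ r else 0))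
      (nhdsWithin 0 (Set.Ioi 0)) Filter.atTop := by
  have hεr : ε < r := lt_of_lt_of_le hε2 (min_le_left _ _)
  have hε0 : 0 < ε := lt_trans (by nlinarith) hε1
  set p : ℝ := r / ε with hpdef
  have hp1 : 1 < p := (one_lt_div hε0).2 hεr
  have hp0 : 0 < p := lt_trans one_pos hp1
  set β : ℝ := (ε - r) / t with hβdef
  have hβneg : β < 0 := div_neg_of_neg_of_pos (by linarith) ht0
  set δ : ℝ := r + β with hδdef
  have hδpos : 0 < δ := by
    have h : δ = (r * t + (ε - r)) / t := by
      rw [hδdef, hβdef]; field_simp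
    rw [h]
    apply div_pos (by nlinarith) ht0
  set C : ℝ := (4 : ℝ) ^ (-p) * (2 : ℝ) ^ β with hCdef
  have hC0 : 0 < C := by
    apply mul_pos (Real.rpow_pos_of_pos (by norm_num) _) (Real.rpow_pos_of_pos (by norm_num) _)
  -- the comparison function tends to atTop
  have htend : Filter.Tendsto (fun ℓ : ℝ => C * ℓ ^ (-δ))
      (nhdsWithin 0 (Set.Ioi 0)) Filter.atTop := by
    have h1 : Filter.Tendsto (fun ℓ : ℝ => (ℓ⁻¹) ^ δ)
        (nhdsWithin 0 (Set.Ioi 0)) Filter.atTop :=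
      (tendsto_rpow_atTop hδpos).comp tendsto_inv_nhdsGT_zero
    have h2 : Filter.Tendsto (fun ℓ : ℝ => ℓ ^ (-δ))
        (nhdsWithin 0 (Set.Ioi 0)) Filter.atTop := by
      apply h1.congr'
      filter_upwards [self_mem_nhdsWithin] with ℓ hℓ
      rw [Real.inv_rpow (le_of_lt hℓ), ← Real.rpow_neg (le_of_lt hℓ)]
    exact Filter.Tendsto.const_mul_atTop hC0 h2
  apply Filter.tendsto_atTop_mono' _ _ htend
  -- eventual facts
  have E2 : ∀ᶠ ℓ : ℝ in nhdsWithin 0 (Set.Ioi 0), ℓ < 2 :=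
    Filter.eventually_of_mem (mem_nhdsWithin_of_mem_nhds (Iio_mem_nhds (by norm_num)))
      (fun x hx => hx)
  have hq : 0 < ε / t - ε := by
    have : ε < ε / t := by rw [lt_div_iff₀ ht0]; nlinarith
    linarith
  have htend2 : Filter.Tendsto (fun ℓ : ℝ => 2 / ℓ) (nhdsWithin 0 (Set.Ioi 0)) Filter.atTop := by
    have := Filter.Tendsto.const_mul_atTop (show (0:ℝ) < 2 by norm_num) tendsto_inv_nhdsGT_zero
    exact this.congr (fun x => (div_eq_mul_inv 2 x).symm)
  have E3 : ∀ᶠ ℓ : ℝ in nhdsWithin 0 (Set.Ioi 0),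
      Real.pi ^ ε ≤ (2 / ℓ) ^ (ε / t - ε) :=
    ((tendsto_rpow_atTop hq).comp htend2).eventually_ge_atTop _
  filter_upwards [self_mem_nhdsWithin, E2, E3] with ℓ hℓ0 hℓ2 hℓ3
  replace hℓ0 : (0:ℝ) < ℓ := hℓ0
  set M : ℝ := (2 / ℓ) ^ (ε / t) with hMdef
  have h2ℓ : (1:ℝ) ≤ 2 / ℓ := (one_le_div hℓ0).2 (le_of_lt hℓ2)
  have h2ℓ0 : (0:ℝ) < 2 / ℓ := by positivity
  have hM1 : (1:ℝ) ≤ M := by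
    have := Real.rpow_le_rpow_of_exponent_le h2ℓ (show (0:ℝ) ≤ ε / t by positivity)
    simpa using this
  have hM0 : (0:ℝ) < M := lt_of_lt_of_le one_pos hM1
  have hMπ : (2 * Real.pi / ℓ) ^ ε ≤ M := by
    rw [show 2 * Real.pi / ℓ = (2 / ℓ) * Real.pi by ring,
      Real.mul_rpow (le_of_lt h2ℓ0) Real.pi_pos.le, hMdef,
      show ε / t = ε + (ε / t - ε) by ring, Real.rpow_add h2ℓ0]
    exact mul_le_mul_of_nonneg_left hℓ3 (Real.rpow_nonneg (le_of_lt h2ℓ0) _)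
  set N : ℕ := ⌈M⌉₊ with hNdef
  have hMN : M ≤ (N : ℝ) := Nat.le_ceil M
  have hN1 : 1 ≤ N := Nat.one_le_ceil_iff.2 hM0
  have hN2M : (N : ℝ) ≤ 2 * M := by
    have := Nat.ceil_lt_add_one (le_of_lt hM0)
    have : (N : ℝ) < M + 1 := this
    linarith
  -- norm of a (k+1)
  have hnorm : ∀ k : ℕ, 1 - ‖a (k + 1)‖ = ((k + 1 : ℕ) : ℝ) ^ (-(1 / ε)) := by
    intro k
    have hk1 : (1:ℝ) ≤ ((k + 1 : ℕ) : ℝ) := by exact_mod_cast Nat.one_le_iff_ne_zero.2 (Nat.succ_ne_zero k)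
    have hle1 : ((k + 1 : ℕ) : ℝ) ^ (-(1 / ε)) ≤ 1 :=
      Real.rpow_le_one_of_one_le_of_nonpos hk1 (neg_nonpos.2 (by positivity))
    rw [ha (k + 1) (Nat.le_add_left 1 k)]
    rw [norm_mul, Complex.norm_real, Complex.norm_exp_ofReal_mul_I, mul_one,
      Real.norm_eq_abs, _root_.abs_of_nonneg (by linarith)]
    ring
  -- membership for k ≥ N
  have hmem : ∀ k : ℕ, N ≤ k → a (k + 1) ∈ carlesonBox θ ℓ := by
    intro k hk
    have hkM : M < ((k + 1 : ℕ) : ℝ) := by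
      have : (N : ℝ) ≤ (k : ℝ) := by exact_mod_cast hk
      push_cast
      linarith
    have hk0 : (0:ℝ) < ((k + 1 : ℕ) : ℝ) := lt_trans hM0 hkM
    -- angle condition
    have f2 : ((k + 1 : ℕ) : ℝ) ^ (-(t / ε)) < ℓ / 2 := by
      have h := Real.rpow_lt_rpow (le_of_lt hM0) hkM (show (0:ℝ) < t / ε by positivity)
      rw [hMdef, ← Real.rpow_mul (le_of_lt h2ℓ0),
        show ε / t * (t / ε) = 1 by field_simp, Real.rpow_one] at h
      rw [Real.rpow_neg (le_of_lt hk0)]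
      calc (((k + 1 : ℕ) : ℝ) ^ (t / ε))⁻¹ < (2 / ℓ)⁻¹ := by
            exact inv_strictAnti₀ h2ℓ0 h
        _ = ℓ / 2 := by rw [inv_div]
    -- radial condition
    have f1 : ((k + 1 : ℕ) : ℝ) ^ (-(1 / ε)) < ℓ / (2 * Real.pi) := by
      have hπℓ : (0:ℝ) < 2 * Real.pi / ℓ := by positivity
      have h := Real.rpow_lt_rpow (Real.rpow_nonneg (le_of_lt hπℓ) ε)
        (lt_of_le_of_lt hMπ hkM) (show (0:ℝ) < 1 / ε by positivity)
      rw [← Real.rpow_mul (le_of_lt hπℓ), mul_one_div, div_self (ne_of_gt hε0),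
        Real.rpow_one] at h
      rw [Real.rpow_neg (le_of_lt hk0)]
      calc (((k + 1 : ℕ) : ℝ) ^ (1 / ε))⁻¹ < (2 * Real.pi / ℓ)⁻¹ := by
            exact inv_strictAnti₀ hπℓ h
        _ = ℓ / (2 * Real.pi) := by rw [inv_div]
    have hpos1 : (0:ℝ) < ((k + 1 : ℕ) : ℝ) ^ (-(1 / ε)) := Real.rpow_pos_of_pos hk0 _
    have hpos2 : (0:ℝ) < ((k + 1 : ℕ) : ℝ) ^ (-(t / ε)) := Real.rpow_pos_of_pos hk0 _
    exact ⟨1 - ((k + 1 : ℕ) : ℝ) ^ (-(1 / ε)), ((k + 1 : ℕ) : ℝ) ^ (-(t / ε)) + θ,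
      by linarith, by linarith, by linarith, by linarith,
      by rw [ha (k + 1) (Nat.le_add_left 1 k)]⟩
  -- summability
  set F : ℕ → ℝ := fun k => if a (k + 1) ∈ carlesonBox θ ℓ then (1 - ‖a (k + 1)‖) ^ r else 0
    with hFdef
  have hval : ∀ k : ℕ, (1 - ‖a (k + 1)‖) ^ r = ((k + 1 : ℕ) : ℝ) ^ (-p) := by
    intro k
    have hk0 : (0:ℝ) ≤ ((k + 1 : ℕ) : ℝ) := by positivity
    rw [hnorm k, ← Real.rpow_mul hk0, show -(1 / ε) * r = -p by rw [hpdef]; ring]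
  have hFnn : ∀ k : ℕ, 0 ≤ F k := by
    intro k
    simp only [hFdef]
    split
    · rw [hval k]; positivity
    · exact le_refl _
  have hsum0 : Summable (fun n : ℕ => ((n : ℝ)) ^ (-p)) :=
    Real.summable_nat_rpow.2 (by linarith)
  have hsum1 : Summable (fun k : ℕ => (((k + 1 : ℕ)) : ℝ) ^ (-p)) :=
    (summable_nat_add_iff 1).2 hsum0
  have hFle : ∀ k : ℕ, F k ≤ ((k + 1 : ℕ) : ℝ) ^ (-p) := by
    intro k
    simp only [hFdef]
    split
    · rw [hval k]
    · positivity
  have hFsum : Summable F := Summable.of_nonneg_of_le hFnn hFle hsum1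
  have hlow : ∀ k ∈ Finset.Ico N (2 * N), ((2 * N : ℕ) : ℝ) ^ (-p) ≤ F k := by
    intro k hk
    rw [Finset.mem_Ico] at hk
    simp only [hFdef]
    rw [if_pos (hmem k hk.1), hval k]
    apply Real.rpow_le_rpow_of_nonpos
    · have : 0 < k + 1 := Nat.succ_pos k
      exact_mod_cast this
    · exact_mod_cast Nat.succ_le_of_lt hk.2
    · linarith
  have hcard : (Finset.Ico N (2 * N)).card = N := by
    rw [Nat.card_Ico]; omega
  have hsumlow : (N : ℝ) * ((2 * N : ℕ) : ℝ) ^ (-p) ≤ ∑ k ∈ Finset.Ico N (2 * N), F k := by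
    have h := Finset.card_nsmul_le_sum (Finset.Ico N (2 * N)) F _ hlow
    rwa [hcard, nsmul_eq_mul] at h
  have htsum : ∑ k ∈ Finset.Ico N (2 * N), F k ≤ tsum F :=
    Summable.sum_le_tsum _ (fun k _ => hFnn k) hFsum
  have h2N4M : ((2 * N : ℕ) : ℝ) ≤ 4 * M := by push_cast; linarith
  have h2N0 : (0 : ℝ) < ((2 * N : ℕ) : ℝ) := by
    have : 0 < 2 * N := by omega
    exact_mod_cast this
  have hstep : (4 : ℝ) ^ (-p) * M ^ (1 - p) ≤ (N : ℝ) * ((2 * N : ℕ) : ℝ) ^ (-p) := by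
    have h1 : (4 * M : ℝ) ^ (-p) ≤ ((2 * N : ℕ) : ℝ) ^ (-p) :=
      Real.rpow_le_rpow_of_nonpos h2N0 h2N4M (by linarith)
    have h2 : ((4 : ℝ) * M) ^ (-p) = (4 : ℝ) ^ (-p) * M ^ (-p) :=
      Real.mul_rpow (by norm_num) hM0.le
    calc (4 : ℝ) ^ (-p) * M ^ (1 - p) = M * ((4 : ℝ) ^ (-p) * M ^ (-p)) := by
          rw [show (1 : ℝ) - p = 1 + (-p) by ring, Real.rpow_add hM0, Real.rpow_one]; ring
      _ = M * ((4 : ℝ) * M) ^ (-p) := by rw [h2]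
      _ ≤ (N : ℝ) * ((2 * N : ℕ) : ℝ) ^ (-p) := by
          apply mul_le_mul hMN h1 (Real.rpow_pos_of_pos (by positivity) _).le
            (le_trans hM0.le hMN)
  have hMβ : M ^ (1 - p) = (2 : ℝ) ^ β * ℓ ^ (-β) := by
    rw [hMdef, ← Real.rpow_mul h2ℓ0.le,
      show ε / t * (1 - p) = β by rw [hpdef, hβdef]; field_simp,
      Real.div_rpow (by norm_num) hℓ0.le, Real.rpow_neg hℓ0.le, div_eq_mul_inv]
  have hfinal : C * ℓ ^ (-δ) = (1 / ℓ ^ r) * ((4 : ℝ) ^ (-p) * ((2 : ℝ) ^ β * ℓ ^ (-β))) := by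
    rw [hCdef, show -δ = -r + -β by rw [hδdef]; ring, Real.rpow_add hℓ0,
      Real.rpow_neg hℓ0.le r]
    ring
  rw [hfinal]
  apply mul_le_mul_of_nonneg_left _ (by positivity)
  calc (4 : ℝ) ^ (-p) * ((2 : ℝ) ^ β * ℓ ^ (-β)) = (4 : ℝ) ^ (-p) * M ^ (1 - p) := by
        rw [hMβ]
    _ ≤ (N : ℝ) * ((2 * N : ℕ) : ℝ) ^ (-p) := hstep
    _ ≤ ∑ k ∈ Finset.Ico N (2 * N), F k := hsumlow
    _ ≤ tsum F := htsum
end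

section
/- Hardy's inequality in the following form: for p > 1 and 0 < s < 1, and any nonnegative measurable function g on (0, L), one has ∫_0^L t^{s−2} ( ∫_0^t g(y) dy )^p dt ≤ (p/(1−s))^p ∫_0^L g(y)^p y^{p−2+s} dy. -/
open Real MeasureTheory

section HardyHelpers
open Set


lemma lintA {c t : ℝ} (hc : -1 < c) (ht : 0 ≤ t) :
    ∫⁻ y in Ioo (0:ℝ) t, ENNReal.ofReal (y ^ c) = ENNReal.ofReal (t ^ (c+1) / (c+1)) := by
  have hii := intervalIntegral.intervalIntegrable_rpow' (a := 0) (b := t) hc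
  have hint : IntegrableOn (fun y : ℝ => y ^ c) (Ioo 0 t) := by
    rw [intervalIntegrable_iff, uIoc_of_le ht] at hii
    exact hii.mono_set Ioo_subset_Ioc_self
  rw [← ofReal_integral_eq_lintegral_ofReal hint]
  · congr 1
    rw [setIntegral_congr_set Ioo_ae_eq_Ioc, ← intervalIntegral.integral_of_le ht,
      integral_rpow (Or.inl hc), Real.zero_rpow (by linarith : c + 1 ≠ 0), sub_zero]
  · filter_upwards [self_mem_ae_restrict measurableSet_Ioo] with y hy
    exact Real.rpow_nonneg hy.1.le _

lemma lintB {c y : ℝ} (hc : c < -1) (hy : 0 < y) :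
    ∫⁻ t in Ioi y, ENNReal.ofReal (t ^ c) = ENNReal.ofReal (y ^ (c+1) / (-(c+1))) := by
  rw [← ofReal_integral_eq_lintegral_ofReal (integrableOn_Ioi_rpow_of_lt hc hy)]
  · rw [integral_Ioi_rpow_of_lt hc hy]
    congr 1
    rw [div_neg, neg_div]
  · filter_upwards [self_mem_ae_restrict measurableSet_Ioi] with t htt
    exact Real.rpow_nonneg (hy.trans htt).le _

lemma holder_step (p s L t : ℝ) (hp : 1 < p) (hs0 : 0 < s) (hs1 : s < 1)
    (g : ℝ → ℝ) (hg : Measurable g) (hg0 : ∀ y ∈ Set.Ioo (0 : ℝ) L, 0 ≤ g y)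
    (ht : t ∈ Ioo (0:ℝ) L) :
    (∫⁻ y in Set.Ioo (0 : ℝ) t, ENNReal.ofReal (g y)) ^ p ≤
      ENNReal.ofReal ((p/(1-s))^(p-1)) * ENNReal.ofReal (t ^ ((1-s)*(p-1)/p)) *
        ∫⁻ y in Set.Ioo (0 : ℝ) t, ENNReal.ofReal (g y ^ p * y ^ ((p-1+s)*(p-1)/p)) := by
  set q : ℝ := p / (p-1) with hq
  have hp0 : (0:ℝ) < p := by linarith
  have hp1 : (0:ℝ) < p - 1 := by linarith
  have h1s : (0:ℝ) < 1 - s := by linarith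
  have hpq : p.HolderConjugate q := Real.HolderConjugate.conjExponent hp
  set α : ℝ := (p-1+s)*(p-1)/p/p with hα
  have hα0 : 0 < α := by positivity
  set r : ℝ := (p-1+s)/p with hr
  have hrq : α * q = r := by rw [hα, hr, hq]; field_simp
  have hr1 : r < 1 := by rw [hr, div_lt_one hp0]; linarith
  have hr0 : 0 < r := by positivity
  set f : ℝ → ENNReal := fun y => ENNReal.ofReal (g y * y ^ α) with hf
  set w : ℝ → ENNReal := fun y => ENNReal.ofReal (y ^ (-α)) with hw
  have hmf : Measurable f := (hg.mul (measurable_id.pow measurable_const)).ennreal_ofReal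
  have hmw : Measurable w := ((measurable_id.pow measurable_const)).ennreal_ofReal
  have key : (∫⁻ y in Ioo (0:ℝ) t, ENNReal.ofReal (g y)) = ∫⁻ y in Ioo (0:ℝ) t, (f * w) y := by
    refine setLIntegral_congr_fun measurableSet_Ioo (fun y hy => ?_)
    have hy0 : 0 < y := hy.1
    have hgy : 0 ≤ g y := hg0 y ⟨hy.1, hy.2.trans ht.2⟩
    simp only [hf, hw, Pi.mul_apply]
    rw [← ENNReal.ofReal_mul (by positivity), mul_assoc, ← Real.rpow_add hy0]
    simp
  have holder := ENNReal.lintegral_mul_le_Lp_mul_Lq (volume.restrict (Ioo (0:ℝ) t)) hpq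
    hmf.aemeasurable hmw.aemeasurable
  have hwq : (∫⁻ y in Ioo (0:ℝ) t, w y ^ q) = ENNReal.ofReal (t ^ (1-r) / (1-r)) := by
    have e1 : (∫⁻ y in Ioo (0:ℝ) t, w y ^ q) = ∫⁻ y in Ioo (0:ℝ) t, ENNReal.ofReal (y ^ (-r)) := by
      refine setLIntegral_congr_fun measurableSet_Ioo
        (fun y hy => ?_)
      rw [hw, ← hrq, ← neg_mul, Real.rpow_mul hy.1.le,
        ENNReal.ofReal_rpow_of_nonneg (Real.rpow_nonneg hy.1.le _) hpq.symm.nonneg]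
    rw [e1, lintA (by linarith) ht.1.le]
    congr 2 <;> ring
  have hfp : (∫⁻ y in Ioo (0:ℝ) t, f y ^ p)
      = ∫⁻ y in Ioo (0:ℝ) t, ENNReal.ofReal (g y ^ p * y ^ ((p-1+s)*(p-1)/p)) := by
    refine setLIntegral_congr_fun measurableSet_Ioo
      (fun y hy => ?_)
    have hy0 : 0 < y := hy.1
    have hgy : 0 ≤ g y := hg0 y ⟨hy.1, hy.2.trans ht.2⟩
    have e2 : g y ^ p * y ^ ((p-1+s)*(p-1)/p) = (g y * y ^ α) ^ p := by
      rw [Real.mul_rpow hgy (Real.rpow_nonneg hy0.le _), ← Real.rpow_mul hy0.le]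
      congr 1
      rw [hα, div_mul_cancel₀ _ hp0.ne']
    rw [hf, e2, ENNReal.ofReal_rpow_of_nonneg (by positivity) hp0.le]
  calc (∫⁻ y in Set.Ioo (0 : ℝ) t, ENNReal.ofReal (g y)) ^ p
      ≤ ((∫⁻ y in Ioo (0:ℝ) t, f y ^ p) ^ (1/p) * (∫⁻ y in Ioo (0:ℝ) t, w y ^ q) ^ (1/q)) ^ p := by
        rw [key]; exact ENNReal.rpow_le_rpow holder hp0.le
    _ = (∫⁻ y in Ioo (0:ℝ) t, f y ^ p) * (∫⁻ y in Ioo (0:ℝ) t, w y ^ q) ^ (p-1) := by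
        rw [ENNReal.mul_rpow_of_nonneg _ _ hp0.le, ← ENNReal.rpow_mul, ← ENNReal.rpow_mul,
          one_div_mul_cancel hp0.ne', ENNReal.rpow_one]
        congr 1
        rw [hq]; field_simp
    _ = ENNReal.ofReal ((p/(1-s))^(p-1)) * ENNReal.ofReal (t ^ ((1-s)*(p-1)/p)) *
        ∫⁻ y in Set.Ioo (0 : ℝ) t, ENNReal.ofReal (g y ^ p * y ^ ((p-1+s)*(p-1)/p)) := by
        rw [hfp, hwq, mul_comm]
        congr 1
        have h1r : 1 - r = (1-s)/p := by rw [hr]; field_simp; ring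
        have e3 : t ^ ((1-s)/p) / ((1-s)/p) = (p/(1-s)) * t ^ ((1-s)/p) := by
          rw [div_div_eq_mul_div]; ring
        rw [h1r, e3, ENNReal.ofReal_rpow_of_nonneg
            (mul_nonneg (div_pos hp0 h1s).le (Real.rpow_nonneg ht.1.le _)) hp1.le,
          Real.mul_rpow (div_pos hp0 h1s).le (Real.rpow_nonneg ht.1.le _),
          ← Real.rpow_mul ht.1.le,
          ENNReal.ofReal_mul (Real.rpow_nonneg (div_pos hp0 h1s).le _)]
        congr 2
        ring

end HardyHelpers

section Main
open Set

/-- Hardy's inequality: for p > 1, 0 < s < 1 and nonnegative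
measurable g on (0, L),
∫_0^L t^{s-2} (∫_0^t g)^p dt ≤ (p/(1-s))^p ∫_0^L g(y)^p y^{p-2+s} dy. -/
theorem stmt_5 (p s L : ℝ) (hp : 1 < p) (hs0 : 0 < s) (hs1 : s < 1) (hL : 0 < L)
    (g : ℝ → ℝ) (hg : Measurable g) (hg0 : ∀ y ∈ Set.Ioo (0 : ℝ) L, 0 ≤ g y) :
    (∫⁻ t in Set.Ioo (0 : ℝ) L, ENNReal.ofReal (t ^ (s - 2)) *
        (∫⁻ y in Set.Ioo (0 : ℝ) t, ENNReal.ofReal (g y)) ^ p)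
      ≤ ENNReal.ofReal ((p / (1 - s)) ^ p) *
        ∫⁻ y in Set.Ioo (0 : ℝ) L, ENNReal.ofReal (g y ^ p * y ^ (p - 2 + s)) := by
  have hp0 : (0:ℝ) < p := by linarith
  have hp1 : (0:ℝ) < p - 1 := by linarith
  have h1s : (0:ℝ) < 1 - s := by linarith
  set a : ℝ := (p-1+s)*(p-1)/p with ha
  set e : ℝ := (1-s)*(p-1)/p with he
  set β : ℝ := s - 2 + e with hβ
  set K : ℝ := (p/(1-s))^(p-1) with hK
  set H : ℝ → ENNReal := fun y => ENNReal.ofReal (g y ^ p * y ^ a) with hH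
  have hmH : Measurable H := ((hg.pow measurable_const).mul
    (measurable_id.pow measurable_const)).ennreal_ofReal
  have hβ1 : β + 1 = (s-1)/p := by rw [hβ, he]; field_simp; ring
  have hβlt : β < -1 := by
    have : (s-1)/p < 0 := div_neg_of_neg_of_pos (by linarith) hp0
    linarith
  have hGmono : Monotone (fun t : ℝ => ∫⁻ y in Ioo (0:ℝ) t, H y) := fun t₁ t₂ h =>
    lintegral_mono_set (Ioo_subset_Ioo le_rfl h)
  have hmG : Measurable (fun t : ℝ => ∫⁻ y in Ioo (0:ℝ) t, H y) := hGmono.measurable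
  -- Step 1: pointwise Hölder
  have step1 : (∫⁻ t in Set.Ioo (0 : ℝ) L, ENNReal.ofReal (t ^ (s - 2)) *
        (∫⁻ y in Set.Ioo (0 : ℝ) t, ENNReal.ofReal (g y)) ^ p)
      ≤ ENNReal.ofReal K * ∫⁻ t in Ioo (0:ℝ) L,
          ENNReal.ofReal (t ^ β) * ∫⁻ y in Ioo (0:ℝ) t, H y := by
    refine le_trans (lintegral_mono_ae ?_) (le_of_eq (lintegral_const_mul _
      (((measurable_id.pow measurable_const).ennreal_ofReal).mul hmG)))
    filter_upwards [self_mem_ae_restrict measurableSet_Ioo] with t ht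
    calc ENNReal.ofReal (t ^ (s - 2)) * (∫⁻ y in Set.Ioo (0 : ℝ) t, ENNReal.ofReal (g y)) ^ p
        ≤ ENNReal.ofReal (t ^ (s - 2)) * (ENNReal.ofReal K * ENNReal.ofReal (t ^ e) *
            ∫⁻ y in Ioo (0:ℝ) t, H y) :=
          mul_le_mul_right (holder_step p s L t hp hs0 hs1 g hg hg0 ht) _
      _ = ENNReal.ofReal K * (ENNReal.ofReal (t ^ β) * ∫⁻ y in Ioo (0:ℝ) t, H y) := by
          rw [← mul_assoc, ← mul_assoc, mul_comm (ENNReal.ofReal (t ^ (s-2))) (ENNReal.ofReal K),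
            mul_assoc (ENNReal.ofReal K), ← ENNReal.ofReal_mul (Real.rpow_nonneg ht.1.le _),
            ← Real.rpow_add ht.1, mul_assoc, hβ]
  -- Step 2: Tonelli
  have step2 : (∫⁻ t in Ioo (0:ℝ) L, ENNReal.ofReal (t ^ β) * ∫⁻ y in Ioo (0:ℝ) t, H y)
      = ∫⁻ y in Ioo (0:ℝ) L, ∫⁻ t in Ioo (0:ℝ) L,
          ENNReal.ofReal (t ^ β) * (Ioo (0:ℝ) t).indicator H y := by
    rw [← lintegral_lintegral_swap]
    · refine setLIntegral_congr_fun measurableSet_Ioo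
        (fun t htt => ?_)
      rw [lintegral_const_mul _ (hmH.indicator measurableSet_Ioo)]
      congr 1
      rw [lintegral_indicator measurableSet_Ioo, Measure.restrict_restrict measurableSet_Ioo,
        Set.inter_eq_self_of_subset_left (Ioo_subset_Ioo le_rfl htt.2.le)]
    · -- AEMeasurable of uncurry
      have : (Function.uncurry fun t y => ENNReal.ofReal (t ^ β) *
          (Ioo (0:ℝ) t).indicator H y) =
          fun z : ℝ × ℝ => ENNReal.ofReal (z.1 ^ β) *
            ({x : ℝ × ℝ | 0 < x.2 ∧ x.2 < x.1}.indicator (fun x => H x.2) z) := by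
        ext z
        simp only [Function.uncurry, Set.indicator_apply, Set.mem_Ioo, Set.mem_setOf_eq]
      rw [this]
      refine Measurable.aemeasurable (Measurable.mul ?_ ?_)
      · exact (measurable_fst.pow measurable_const).ennreal_ofReal
      · exact (hmH.comp measurable_snd).indicator
          ((measurableSet_lt measurable_const measurable_snd).inter
            (measurableSet_lt measurable_snd measurable_fst))
  -- Step 3: inner integral bound
  have step3 : (∫⁻ y in Ioo (0:ℝ) L, ∫⁻ t in Ioo (0:ℝ) L,
        ENNReal.ofReal (t ^ β) * (Ioo (0:ℝ) t).indicator H y)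
      ≤ ENNReal.ofReal (p/(1-s)) *
        ∫⁻ y in Set.Ioo (0 : ℝ) L, ENNReal.ofReal (g y ^ p * y ^ (p - 2 + s)) := by
    refine le_trans (lintegral_mono_ae ?_) (le_of_eq (lintegral_const_mul _
      (((hg.pow measurable_const).mul
        (measurable_id.pow measurable_const)).ennreal_ofReal)))
    filter_upwards [self_mem_ae_restrict measurableSet_Ioo] with y hy
    have hy0 : 0 < y := hy.1
    have hgy : 0 ≤ g y := hg0 y hy
    have e1 : (∫⁻ t in Ioo (0:ℝ) L, ENNReal.ofReal (t ^ β) * (Ioo (0:ℝ) t).indicator H y)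
        = ∫⁻ t in Ioo (0:ℝ) L, (Ioi y).indicator (fun t => ENNReal.ofReal (t ^ β) * H y) t := by
      refine setLIntegral_congr_fun measurableSet_Ioo
        (fun t htt => ?_)
      by_cases hc : y < t
      · rw [Set.indicator_of_mem (Set.mem_Ioo.2 ⟨hy0, hc⟩), Set.indicator_of_mem (Set.mem_Ioi.2 hc)]
      · rw [Set.indicator_of_notMem (fun h => hc (Set.mem_Ioo.1 h).2), Set.indicator_of_notMem (fun h => hc (Set.mem_Ioi.1 h)), mul_zero]
    rw [e1, lintegral_indicator measurableSet_Ioi,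
      Measure.restrict_restrict measurableSet_Ioi]
    have e2 : Ioi y ∩ Ioo (0:ℝ) L = Ioo y L := by
      ext t
      simp only [Set.mem_inter_iff, Set.mem_Ioi, Set.mem_Ioo]
      exact ⟨fun h => ⟨h.1, h.2.2⟩, fun h => ⟨h.1, hy0.trans h.1, h.2⟩⟩
    rw [e2, lintegral_mul_const _ ((measurable_id'.pow measurable_const).ennreal_ofReal)]
    calc (∫⁻ t in Ioo y L, ENNReal.ofReal (t ^ β)) * H y
        ≤ (∫⁻ t in Ioi y, ENNReal.ofReal (t ^ β)) * H y :=
          mul_le_mul_left (lintegral_mono_set Ioo_subset_Ioi_self) _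
      _ = ENNReal.ofReal (y ^ (β+1) / (-(β+1))) * H y := by rw [lintB hβlt hy0]
      _ = ENNReal.ofReal (p/(1-s)) * ENNReal.ofReal (g y ^ p * y ^ (p - 2 + s)) := by
          have hneg : 0 ≤ -(β+1) := by
            rw [hβ1, show -((s-1)/p) = (1-s)/p by ring]; positivity
          rw [hH, ← ENNReal.ofReal_mul (div_nonneg (Real.rpow_nonneg hy0.le _) hneg),
            ← ENNReal.ofReal_mul (div_pos hp0 h1s).le]
          congr 1
          have eexp : (s-1)/p + a = p - 2 + s := by rw [ha]; field_simp; ring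
          have ey : y ^ (p-2+s) = y ^ ((s-1)/p) * y ^ a := by
            rw [← Real.rpow_add hy0, eexp]
          rw [hβ1, show -((s-1)/p) = (1-s)/p by ring, div_div_eq_mul_div, ey]
          field_simp
  -- combine
  calc (∫⁻ t in Set.Ioo (0 : ℝ) L, ENNReal.ofReal (t ^ (s - 2)) *
        (∫⁻ y in Set.Ioo (0 : ℝ) t, ENNReal.ofReal (g y)) ^ p)
      ≤ ENNReal.ofReal K * ∫⁻ t in Ioo (0:ℝ) L,
          ENNReal.ofReal (t ^ β) * ∫⁻ y in Ioo (0:ℝ) t, H y := step1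
    _ ≤ ENNReal.ofReal K * (ENNReal.ofReal (p/(1-s)) *
          ∫⁻ y in Set.Ioo (0 : ℝ) L, ENNReal.ofReal (g y ^ p * y ^ (p - 2 + s))) := by
        rw [step2]; exact mul_le_mul_right step3 _
    _ = ENNReal.ofReal ((p / (1 - s)) ^ p) *
          ∫⁻ y in Set.Ioo (0 : ℝ) L, ENNReal.ofReal (g y ^ p * y ^ (p - 2 + s)) := by
        rw [← mul_assoc, ← ENNReal.ofReal_mul (by positivity), hK]
        congr 2
        rw [← Real.rpow_add_one (div_pos hp0 h1s).ne']
        congr 1; ring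

end Main
end

section
/- Let 1 < p₁ ≤ p₂ < ∞ and 0 < s ≤ r < 1. Then 𝒬^{p₁}_s(𝔻) ⊆ 𝒬^{p₂}_r(𝔻); more precisely, for f ∈ 𝒬^{p₁}_s(𝔻), sup_{a∈𝔻} ∫_𝔻 |f'(z)|^{p₂} (1−|z|²)^{p₂−2} (1−|σ_a(z)|²)^r dA(z) ≤ ‖f‖_ℬ^{p₂−p₁} · sup_{a∈𝔻} ∫_𝔻 |f'(z)|^{p₁} (1−|z|²)^{p₁−2} (1−|σ_a(z)|²)^s dA(z). -/
open Complex Real MeasureTheory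

noncomputable def moebius (a z : ℂ) : ℂ := (a - z) / (1 - (starRingEnd ℂ) a * z)

lemma moebius_norm_le_one {a z : ℂ} (ha : ‖a‖ < 1) (hz : ‖z‖ < 1) :
    ‖moebius a z‖ ≤ 1 := by
  have hd : (0:ℝ) < ‖(1 : ℂ) - (starRingEnd ℂ) a * z‖ := by
    have h1 : ‖(starRingEnd ℂ) a * z‖ < 1 := by
      rw [norm_mul, RCLike.norm_conj]
      calc ‖a‖ * ‖z‖ ≤ ‖a‖ * 1 := by
            exact mul_le_mul_of_nonneg_left hz.le (norm_nonneg _)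
        _ < 1 := by simpa using ha
    calc (0:ℝ) < 1 - ‖(starRingEnd ℂ) a * z‖ := by linarith
      _ ≤ ‖(1:ℂ) - (starRingEnd ℂ) a * z‖ := by
          simpa using norm_sub_norm_le (1:ℂ) ((starRingEnd ℂ) a * z)
  have hnum : ‖a - z‖ ≤ ‖(1:ℂ) - (starRingEnd ℂ) a * z‖ := by
    have hsq : Complex.normSq (a - z) ≤ Complex.normSq ((1:ℂ) - (starRingEnd ℂ) a * z) := by
      have ha2 : a.re ^ 2 + a.im ^ 2 < 1 := by
        have h1 := Complex.normSq_eq_norm_sq a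
        rw [Complex.normSq_apply] at h1
        nlinarith [norm_nonneg a]
      have hz2 : z.re ^ 2 + z.im ^ 2 < 1 := by
        have h1 := Complex.normSq_eq_norm_sq z
        rw [Complex.normSq_apply] at h1
        nlinarith [norm_nonneg z]
      simp only [Complex.normSq_apply, Complex.sub_re, Complex.sub_im, Complex.mul_re,
        Complex.mul_im, Complex.one_re, Complex.one_im, map_one,
        Complex.conj_re, Complex.conj_im]
      nlinarith [sq_nonneg (a.re - z.re), sq_nonneg (a.im - z.im)]
    have := Real.sqrt_le_sqrt hsq
    simpa [Complex.norm_def] using this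
  rw [moebius, norm_div, div_le_one hd]
  exact hnum

lemma ptwise {g t u B p₁ p₂ s r : ℝ} (hg : 0 ≤ g) (ht : 0 < t) (hu0 : 0 ≤ u) (hu1 : u ≤ 1)
    (hgt : g * t ≤ B) (hB : 0 ≤ B) (hp₁ : 1 < p₁) (hp : p₁ ≤ p₂)
    (hs0 : 0 < s) (hsr : s ≤ r) :
    g ^ p₂ * t ^ (p₂ - 2) * u ^ r ≤ B ^ (p₂ - p₁) * (g ^ p₁ * t ^ (p₁ - 2) * u ^ s) := by
  have hur : u ^ r ≤ u ^ s := by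
    rcases eq_or_lt_of_le hu0 with h | h
    · rw [← h, Real.zero_rpow (by linarith), Real.zero_rpow (by linarith)]
    · exact Real.rpow_le_rpow_of_exponent_ge h hu1 hsr
  rcases eq_or_lt_of_le hg with hg0 | hg0
  · rw [← hg0, Real.zero_rpow (by linarith)]
    have : (0:ℝ) ≤ B ^ (p₂ - p₁) * (0 ^ p₁ * t ^ (p₁ - 2) * u ^ s) := by positivity
    simpa using this
  · have key : g ^ p₂ * t ^ (p₂ - 2) = (g * t) ^ (p₂ - p₁) * (g ^ p₁ * t ^ (p₁ - 2)) := by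
      rw [Real.mul_rpow hg0.le ht.le]
      rw [show g ^ (p₂ - p₁) * t ^ (p₂ - p₁) * (g ^ p₁ * t ^ (p₁ - 2))
          = (g ^ (p₂ - p₁) * g ^ p₁) * (t ^ (p₂ - p₁) * t ^ (p₁ - 2)) by ring]
      rw [← Real.rpow_add hg0, ← Real.rpow_add ht]
      ring_nf
    rw [key]
    have h1 : (g * t) ^ (p₂ - p₁) ≤ B ^ (p₂ - p₁) :=
      Real.rpow_le_rpow (by positivity) hgt (by linarith)
    calc (g * t) ^ (p₂ - p₁) * (g ^ p₁ * t ^ (p₁ - 2)) * u ^ r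
        ≤ B ^ (p₂ - p₁) * (g ^ p₁ * t ^ (p₁ - 2)) * u ^ s := by
          apply mul_le_mul _ hur (by positivity) (by positivity)
          exact mul_le_mul_of_nonneg_right h1 (by positivity)
      _ = B ^ (p₂ - p₁) * (g ^ p₁ * t ^ (p₁ - 2) * u ^ s) := by ring

/-- for 1 < p₁ ≤ p₂ < ∞, 0 < s ≤ r < 1 and f analytic on 𝔻 with
Bloch bound (1-|z|²)|f'(z)| ≤ B,
sup_a ∫ |f'|^{p₂}(1-|z|²)^{p₂-2}(1-|σ_a|²)^r dA
  ≤ B^{p₂-p₁} sup_a ∫ |f'|^{p₁}(1-|z|²)^{p₁-2}(1-|σ_a|²)^s dA,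
so that 𝒬^{p₁}_s(𝔻) ⊆ 𝒬^{p₂}_r(𝔻). -/
theorem stmt_11 (p₁ p₂ s r : ℝ) (hp₁ : 1 < p₁) (hp : p₁ ≤ p₂)
    (hs0 : 0 < s) (hsr : s ≤ r) (hr1 : r < 1)
    (f : ℂ → ℂ) (hf : DifferentiableOn ℂ f (Metric.ball 0 1))
    (B : ℝ) (hB : 0 ≤ B)
    (hBloch : ∀ z ∈ Metric.ball (0 : ℂ) 1, (1 - ‖z‖ ^ 2) * ‖deriv f z‖ ≤ B) :
    (⨆ a ∈ Metric.ball (0 : ℂ) 1,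
        ∫⁻ z in Metric.ball (0 : ℂ) 1,
          ENNReal.ofReal (‖deriv f z‖ ^ p₂ * (1 - ‖z‖ ^ 2) ^ (p₂ - 2) *
            (1 - ‖moebius a z‖ ^ 2) ^ r))
      ≤ ENNReal.ofReal (B ^ (p₂ - p₁)) *
        ⨆ a ∈ Metric.ball (0 : ℂ) 1,
          ∫⁻ z in Metric.ball (0 : ℂ) 1,
            ENNReal.ofReal (‖deriv f z‖ ^ p₁ * (1 - ‖z‖ ^ 2) ^ (p₁ - 2) *
              (1 - ‖moebius a z‖ ^ 2) ^ s) := by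
  refine iSup₂_le fun a ha => ?_
  have ha' : ‖a‖ < 1 := by simpa using ha
  have step1 : (∫⁻ z in Metric.ball (0 : ℂ) 1,
      ENNReal.ofReal (‖deriv f z‖ ^ p₂ * (1 - ‖z‖ ^ 2) ^ (p₂ - 2) *
        (1 - ‖moebius a z‖ ^ 2) ^ r))
      ≤ ∫⁻ z in Metric.ball (0 : ℂ) 1,
        ENNReal.ofReal (B ^ (p₂ - p₁)) *
          ENNReal.ofReal (‖deriv f z‖ ^ p₁ * (1 - ‖z‖ ^ 2) ^ (p₁ - 2) *
            (1 - ‖moebius a z‖ ^ 2) ^ s) := by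
    rw [← lintegral_indicator Metric.isOpen_ball.measurableSet _,
        ← lintegral_indicator Metric.isOpen_ball.measurableSet _]
    refine lintegral_mono fun z => ?_
    by_cases hz : z ∈ Metric.ball (0 : ℂ) 1
    swap
    · simp [Set.indicator_of_notMem hz]
    rw [Set.indicator_of_mem hz, Set.indicator_of_mem hz]
    have hz' : ‖z‖ < 1 := by simpa using hz
    have ht : (0:ℝ) < 1 - ‖z‖ ^ 2 := by nlinarith [norm_nonneg z]
    have hm := moebius_norm_le_one ha' hz'
    have hu0 : (0:ℝ) ≤ 1 - ‖moebius a z‖ ^ 2 := by nlinarith [norm_nonneg (moebius a z)]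
    have hu1 : 1 - ‖moebius a z‖ ^ 2 ≤ 1 := by nlinarith [norm_nonneg (moebius a z)]
    have hgt : ‖deriv f z‖ * (1 - ‖z‖ ^ 2) ≤ B := by
      have := hBloch z hz; linarith [this, mul_comm (1 - ‖z‖^2) ‖deriv f z‖]
    rw [← ENNReal.ofReal_mul (by positivity)]
    exact ENNReal.ofReal_le_ofReal
      (ptwise (norm_nonneg _) ht hu0 hu1 (by linarith [mul_comm ‖deriv f z‖ (1 - ‖z‖^2)]) hB hp₁ hp hs0 hsr)
  calc _ ≤ _ := step1
    _ = ENNReal.ofReal (B ^ (p₂ - p₁)) * ∫⁻ z in Metric.ball (0 : ℂ) 1,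
          ENNReal.ofReal (‖deriv f z‖ ^ p₁ * (1 - ‖z‖ ^ 2) ^ (p₁ - 2) *
            (1 - ‖moebius a z‖ ^ 2) ^ s) := lintegral_const_mul' _ _ ENNReal.ofReal_ne_top
    _ ≤ _ := by
        gcongr
        exact le_iSup₂ (f := fun a (_ : a ∈ Metric.ball (0:ℂ) 1) =>
          ∫⁻ z in Metric.ball (0 : ℂ) 1,
            ENNReal.ofReal (‖deriv f z‖ ^ p₁ * (1 - ‖z‖ ^ 2) ^ (p₁ - 2) *
              (1 - ‖moebius a z‖ ^ 2) ^ s)) a ha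
end

section
/- Let 0 < r < 1 and 0 < r' ≤ 2. For ζ, η ∈ 𝕋 (distinct points of the unit circle), ∫_𝔻 (1−|z|²)^r / (|ζ−z|² |η−z|²) dA(z) ≤ C |ζ−η|^{r−2} for a constant C depending only on r. -/
open Complex Real MeasureTheory Set Metric
open scoped ENNReal

lemma lintegral_comp_norm_complex {g : ℝ → ℝ≥0∞} (hg : Measurable g) :
    ∫⁻ z : ℂ, g ‖z‖ = ENNReal.ofReal (2 * π) * ∫⁻ y in Set.Ioi (0:ℝ), ENNReal.ofReal y * g y := by
  have h0 : ∫⁻ z : ℂ, g ‖z‖ = ∫⁻ z in ({(0:ℂ)}ᶜ), g ‖z‖ := by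
    rw [MeasureTheory.restrict_compl_singleton]
  rw [h0, ← lintegral_subtype_comap (measurableSet_singleton (0:ℂ)).compl]
  have hmp := (volume : Measure ℂ).measurePreserving_homeomorphUnitSphereProd
  have hf : Measurable fun p : sphere (0:ℂ) 1 × Set.Ioi (0:ℝ) => g p.2 :=
    hg.comp (measurable_subtype_coe.comp measurable_snd)
  have h2 : ∫⁻ x : ({0}ᶜ : Set ℂ), g ‖(x : ℂ)‖ ∂((volume : Measure ℂ).comap Subtype.val)
      = ∫⁻ p : sphere (0:ℂ) 1 × Set.Ioi (0:ℝ), g p.2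
          ∂((volume : Measure ℂ).toSphere.prod (Measure.volumeIoiPow (Module.finrank ℝ ℂ - 1))) := by
    rw [← hmp.lintegral_comp hf]
    refine lintegral_congr fun x => ?_
    rw [homeomorphUnitSphereProd_apply_snd_coe]
  rw [h2, lintegral_prod _ hf.aemeasurable]
  simp only [lintegral_const]
  rw [Measure.toSphere_apply_univ]
  have hrank : Module.finrank ℝ ℂ = 2 := Complex.finrank_real_complex
  have hvol : (volume : Measure ℂ) (ball 0 1) = ENNReal.ofReal π := by
    rw [Complex.volume_ball, ENNReal.ofReal_one, one_pow, one_mul,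
      ← ENNReal.ofReal_coe_nnreal, NNReal.coe_real_pi]
  have hdens : ∫⁻ y, g y ∂(Measure.volumeIoiPow (Module.finrank ℝ ℂ - 1))
      = ∫⁻ y in Set.Ioi (0:ℝ), ENNReal.ofReal y * g y := by
    have key := lintegral_withDensity_eq_lintegral_mul
      (Measure.comap Subtype.val volume : Measure (Set.Ioi (0:ℝ)))
      (f := fun x : Set.Ioi (0:ℝ) => ENNReal.ofReal ((x:ℝ) ^ (Module.finrank ℝ ℂ - 1)))
      (Measurable.ennreal_ofReal (measurable_subtype_coe.pow_const _))
      (g := fun y : Set.Ioi (0:ℝ) => g ↑y) (hg.comp measurable_subtype_coe)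
    rw [Measure.volumeIoiPow, key, ← lintegral_subtype_comap measurableSet_Ioi]
    refine lintegral_congr fun y => ?_
    simp [hrank]
  rw [hdens, hvol, hrank]
  rw [ENNReal.ofReal_mul (by norm_num), ENNReal.ofReal_ofNat]
  ring

lemma radial_bound (r : ℝ) (hr0 : 0 < r) (hr1 : r < 1) {s : ℝ} (hs0 : 0 < s) (hs1 : s ≤ 1) :
    (∫⁻ y in Set.Ioi (0:ℝ), ENNReal.ofReal y *
        ENNReal.ofReal (if y < 2 then y ^ (r-2) / (max s y)^2 else 0))
      ≤ ENNReal.ofReal ((1/r + 1/(2-r)) * s ^ (r-2)) := by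
  set F : ℝ → ℝ := fun y => if y < 2 then y ^ (r-2) / (max s y)^2 else 0 with hF
  have hstep1 : (∫⁻ y in Set.Ioi (0:ℝ), ENNReal.ofReal y * ENNReal.ofReal (F y))
      = ∫⁻ y in Set.Ioi (0:ℝ), ENNReal.ofReal (y * F y) := by
    refine setLIntegral_congr_fun measurableSet_Ioi (fun y hy => ?_)
    rw [ENNReal.ofReal_mul (le_of_lt hy)]
  rw [hstep1, ← Ioc_union_Ioi_eq_Ioi hs0.le]
  refine le_trans (lintegral_union_le _ _ _) ?_
  have hs2 : s < 2 := lt_of_le_of_lt hs1 (by norm_num)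
  -- piece 1
  have hint1 : IntegrableOn (fun y : ℝ => y ^ (r-1)) (Ioc 0 s) := by
    rw [← intervalIntegrable_iff_integrableOn_Ioc_of_le hs0.le]
    exact intervalIntegral.intervalIntegrable_rpow' (by linarith)
  have hval1 : ∫ y in Ioc 0 s, y ^ (r-1) = s ^ r / r := by
    rw [← intervalIntegral.integral_of_le hs0.le,
      integral_rpow (Or.inl (by linarith : (-1:ℝ) < r - 1))]
    rw [sub_add_cancel, Real.zero_rpow hr0.ne', sub_zero]
  have hp1 : (∫⁻ y in Ioc 0 s, ENNReal.ofReal (y * F y))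
      ≤ ENNReal.ofReal (s ^ (r-2) / r) := by
    have hmono : ∀ y ∈ Ioc 0 s, ENNReal.ofReal (y * F y)
        ≤ ENNReal.ofReal (y ^ (r-1)) * ENNReal.ofReal (1 / s^2) := by
      intro y hy
      rw [← ENNReal.ofReal_mul (Real.rpow_nonneg hy.1.le _)]
      apply ENNReal.ofReal_le_ofReal
      have hmax : max s y = s := max_eq_left hy.2
      have hy2 : y < 2 := lt_of_le_of_lt hy.2 hs2
      rw [hF]; simp only [if_pos hy2, hmax]
      have : y * (y ^ (r-2) / s^2) = (y ^ (r-2) * y) * (1/s^2) := by ring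
      rw [this, ← Real.rpow_add_one hy.1.ne' (r-2), show r-2+1 = r-1 by ring]
    refine le_trans (setLIntegral_mono' measurableSet_Ioc hmono) ?_
    rw [lintegral_mul_const' _ _ ENNReal.ofReal_ne_top,
      ← ofReal_integral_eq_lintegral_ofReal hint1
        ((ae_restrict_iff' measurableSet_Ioc).2
          (ae_of_all _ fun y hy => Real.rpow_nonneg hy.1.le _))]
    rw [hval1, ← ENNReal.ofReal_mul (by positivity)]
    apply ENNReal.ofReal_le_ofReal
    rw [Real.rpow_sub hs0, Real.rpow_two]
    rw [div_mul_div_comm, mul_one, div_div, mul_comm r (s^2)]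
  -- piece 2
  have hs0' : (0:ℝ) ∉ Set.uIcc s 2 := by
    rw [Set.uIcc_of_le hs2.le]
    exact fun h => lt_irrefl (0:ℝ) (lt_of_lt_of_le hs0 h.1)
  have hint2 : IntegrableOn (fun y : ℝ => y ^ (r-3)) (Ioc s 2) := by
    rw [← intervalIntegrable_iff_integrableOn_Ioc_of_le hs2.le]
    exact intervalIntegral.intervalIntegrable_rpow (Or.inr hs0')
  have hval2 : ∫ y in Ioc s 2, y ^ (r-3) = (2 ^ (r-2) - s ^ (r-2))/(r-2) := by
    rw [← intervalIntegral.integral_of_le hs2.le,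
      integral_rpow (Or.inr ⟨by intro h; apply (by linarith : r ≠ 2); linarith, hs0'⟩)]
    rw [show r-3+1 = r-2 by ring]
  have hp2 : (∫⁻ y in Ioi s, ENNReal.ofReal (y * F y)) ≤ ENNReal.ofReal (s^(r-2)/(2-r)) := by
    rw [← Ioc_union_Ioi_eq_Ioi hs2.le]
    refine le_trans (lintegral_union_le _ _ _) ?_
    have h2zero : (∫⁻ y in Ioi (2:ℝ), ENNReal.ofReal (y * F y)) = 0 := by
      rw [setLIntegral_congr_fun measurableSet_Ioi
        (fun y (hy : 2 < y) => show ENNReal.ofReal (y * F y) = 0 by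
          rw [hF]; simp [not_lt.2 hy.le])]
      simp
    rw [h2zero, add_zero]
    have hmono : ∀ y ∈ Ioc s 2, ENNReal.ofReal (y * F y) ≤ ENNReal.ofReal (y ^ (r-3)) := by
      intro y hy
      have hy0 : 0 < y := lt_trans hs0 hy.1
      apply ENNReal.ofReal_le_ofReal
      rcases lt_or_ge y 2 with h2 | h2
      · rw [hF]; simp only [if_pos h2, max_eq_right hy.1.le]
        have e1 : y * (y ^ (r-2) / y^2) = (y ^ (r-2) * y) / y^2 := by ring
        rw [e1, ← Real.rpow_add_one hy0.ne' (r-2), show r-2+1 = r-1 by ring,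
          ← Real.rpow_two, ← Real.rpow_sub hy0, show r-1-2 = r-3 by ring]
      · rw [hF]; simp only [not_lt.2 h2, if_false, mul_zero]
        exact Real.rpow_nonneg hy0.le _
    refine le_trans (setLIntegral_mono' measurableSet_Ioc hmono) ?_
    rw [← ofReal_integral_eq_lintegral_ofReal hint2
      ((ae_restrict_iff' measurableSet_Ioc).2
        (ae_of_all _ fun y hy => Real.rpow_nonneg (lt_trans hs0 hy.1).le _))]
    rw [hval2]
    apply ENNReal.ofReal_le_ofReal
    have e2 : (2 ^ (r-2) - s ^ (r-2))/(r-2) = (s ^ (r-2) - 2 ^ (r-2))/(2-r) := by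
      have h1 : r - 2 ≠ 0 := by linarith
      have h2 : (2:ℝ) - r ≠ 0 := by linarith
      field_simp
      ring
    rw [e2]
    refine (div_le_div_iff_of_pos_right (by linarith)).2 ?_
    nlinarith [Real.rpow_nonneg (by norm_num : (0:ℝ) ≤ 2) (r-2)]
  refine le_trans (add_le_add hp1 hp2) ?_
  rw [← ENNReal.ofReal_add (div_nonneg (Real.rpow_nonneg hs0.le _) hr0.le)
    (div_nonneg (Real.rpow_nonneg hs0.le _) (by linarith))]
  exact ENNReal.ofReal_le_ofReal (le_of_eq (by ring))

/-- for 0 < r < 1 and distinct points ζ, η of the unit circle,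
∫_𝔻 (1-|z|²)^r / (|ζ-z|² |η-z|²) dA(z) ≤ C |ζ-η|^{r-2}, C = C(r). -/
theorem stmt_16 (r : ℝ) (hr0 : 0 < r) (hr1 : r < 1) :
    ∃ C : ℝ, 0 < C ∧ ∀ ζ η : ℂ, ‖ζ‖ = 1 → ‖η‖ = 1 → ζ ≠ η →
      (∫⁻ z in Metric.ball (0 : ℂ) 1,
          ENNReal.ofReal ((1 - ‖z‖ ^ 2) ^ r / (‖ζ - z‖ ^ 2 * ‖η - z‖ ^ 2)))
        ≤ ENNReal.ofReal (C * ‖ζ - η‖ ^ (r - 2)) := by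
  have h2r : (0:ℝ) < 2 - r := by linarith
  set K : ℝ := 1/r + 1/(2-r) with hK
  have hKpos : 0 < K := add_pos (one_div_pos.2 hr0) (one_div_pos.2 h2r)
  refine ⟨2 ^ r * (2 * (2 * π * (K * 2 ^ (2 - r)))), by positivity, ?_⟩
  intro ζ η hζ hη hne
  set d : ℝ := ‖ζ - η‖ with hd
  have hd0 : 0 < d := norm_pos_iff.2 (sub_ne_zero.2 hne)
  have hd2 : d ≤ 2 := by
    calc d ≤ ‖ζ‖ + ‖η‖ := norm_sub_le _ _
    _ = 2 := by rw [hζ, hη]; norm_num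
  set s : ℝ := d / 2 with hs
  have hs0 : 0 < s := by positivity
  have hs1 : s ≤ 1 := by rw [hs]; linarith
  set H : ℂ → ℝ := fun w => ‖w‖ ^ (r-2) / (max s ‖w‖)^2 with hH
  set F : ℝ → ℝ := fun y => if y < 2 then y ^ (r-2) / (max s y)^2 else 0 with hF
  have hHnn : ∀ w : ℂ, 0 ≤ H w := fun w =>
    div_nonneg (Real.rpow_nonneg (norm_nonneg _) _) (sq_nonneg _)
  -- measurability
  have hHmeas : Measurable H := by
    rw [hH]; fun_prop
  have hFmeas : Measurable F := by
    apply Measurable.ite (measurableSet_lt measurable_id measurable_const)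
    · fun_prop
    · exact measurable_const
  -- pointwise key inequality on reals
  have key : ∀ u a b : ℝ, 0 ≤ u → 0 < a → a ≤ b → s ≤ b → u ≤ 2*a →
      u ^ r / (a^2 * b^2) ≤ 2 ^ r * (a ^ (r-2) / (max s a)^2) := by
    intro u a b hu ha hab hsb hu2
    have h1 : u ^ r ≤ 2^r * a^r := by
      calc u ^ r ≤ (2*a) ^ r := Real.rpow_le_rpow hu hu2 hr0.le
      _ = 2^r * a^r := Real.mul_rpow (by norm_num) ha.le
    have hm : 0 < max s a := lt_max_of_lt_right ha
    have h2 : (max s a)^2 ≤ b^2 := pow_le_pow_left₀ hm.le (max_le hsb hab) 2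
    have h3 : u ^ r / (a^2 * b^2) ≤ (2^r * a^r) / (a^2 * (max s a)^2) :=
      div_le_div₀ (by positivity) h1 (by positivity) (by nlinarith)
    refine h3.trans (le_of_eq ?_)
    rw [Real.rpow_sub ha, Real.rpow_two]
    ring
  -- pointwise bound on the ball
  have hpt : ∀ z ∈ ball (0:ℂ) 1,
      ENNReal.ofReal ((1 - ‖z‖^2)^r / (‖ζ-z‖^2 * ‖η-z‖^2)) ≤
        ENNReal.ofReal (2^r * (H (ζ-z) + H (η-z))) := by
    intro z hz
    have hz1 : ‖z‖ < 1 := mem_ball_zero_iff.1 hz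
    have hz0 : 0 ≤ ‖z‖ := norm_nonneg z
    have hu : 0 ≤ 1 - ‖z‖^2 := by nlinarith
    have haζ : 0 < ‖ζ - z‖ := by
      have h := norm_sub_norm_le ζ z
      rw [hζ] at h; linarith
    have haη : 0 < ‖η - z‖ := by
      have h := norm_sub_norm_le η z
      rw [hη] at h; linarith
    have h2ζ : 1 - ‖z‖^2 ≤ 2*‖ζ-z‖ := by
      have h := norm_sub_norm_le ζ z
      rw [hζ] at h; nlinarith
    have h2η : 1 - ‖z‖^2 ≤ 2*‖η-z‖ := by
      have h := norm_sub_norm_le η z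
      rw [hη] at h; nlinarith
    have hsum : d ≤ ‖ζ-z‖ + ‖η-z‖ := by
      have : ζ - η = (ζ - z) - (η - z) := by ring
      rw [hd, this]
      exact norm_sub_le _ _
    have h2rnn : (0:ℝ) ≤ 2^r := Real.rpow_nonneg (by norm_num) r
    apply ENNReal.ofReal_le_ofReal
    rcases le_total (‖ζ-z‖) (‖η-z‖) with hab | hab
    · have hsb : s ≤ ‖η - z‖ := by rw [hs]; linarith
      calc (1-‖z‖^2)^r/(‖ζ-z‖^2*‖η-z‖^2) ≤ 2^r * (H (ζ-z)) :=
            key _ _ _ hu haζ hab hsb h2ζ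
      _ ≤ 2^r * (H (ζ-z) + H (η-z)) :=
            mul_le_mul_of_nonneg_left (le_add_of_nonneg_right (hHnn _)) h2rnn
    · have hsb : s ≤ ‖ζ - z‖ := by rw [hs]; linarith
      have e : ‖ζ-z‖^2*‖η-z‖^2 = ‖η-z‖^2*‖ζ-z‖^2 := by ring
      rw [e]
      calc (1-‖z‖^2)^r/(‖η-z‖^2*‖ζ-z‖^2) ≤ 2^r * (H (η-z)) :=
            key _ _ _ hu haη hab hsb h2η
      _ ≤ 2^r * (H (ζ-z) + H (η-z)) :=
            mul_le_mul_of_nonneg_left (le_add_of_nonneg_left (hHnn _)) h2rnn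
  -- one-center integral bound
  have hterm : ∀ w : ℂ, ‖w‖ = 1 → (∫⁻ z in ball (0:ℂ) 1, ENNReal.ofReal (H (w - z)))
      ≤ ENNReal.ofReal (2*π) * ENNReal.ofReal (K * s^(r-2)) := by
    intro w hw
    have hgmeas : Measurable fun y : ℝ => ENNReal.ofReal (F y) := hFmeas.ennreal_ofReal
    calc (∫⁻ z in ball (0:ℂ) 1, ENNReal.ofReal (H (w-z)))
        = ∫⁻ z in ball (0:ℂ) 1, ENNReal.ofReal (F ‖w-z‖) := by
          refine setLIntegral_congr_fun measurableSet_ball (fun z hz => ?_)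
          have hlt : ‖w - z‖ < 2 := by
            calc ‖w-z‖ ≤ ‖w‖ + ‖z‖ := norm_sub_le _ _
            _ < 2 := by rw [hw]; linarith [mem_ball_zero_iff.1 hz]
          rw [hH, hF]
          simp only [if_pos hlt]
      _ ≤ ∫⁻ z : ℂ, ENNReal.ofReal (F ‖w - z‖) := setLIntegral_le_lintegral _ _
      _ = ∫⁻ z : ℂ, ENNReal.ofReal (F ‖z‖) :=
          (Measure.measurePreserving_sub_left (volume : Measure ℂ) w).lintegral_comp
            (hgmeas.comp measurable_norm)
      _ = ENNReal.ofReal (2*π) * ∫⁻ y in Set.Ioi (0:ℝ),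
            ENNReal.ofReal y * ENNReal.ofReal (F y) := lintegral_comp_norm_complex hgmeas
      _ ≤ ENNReal.ofReal (2*π) * ENNReal.ofReal (K * s^(r-2)) :=
          mul_le_mul_right (radial_bound r hr0 hr1 hs0 hs1) _
  -- assemble
  set T := ENNReal.ofReal (2*π) * ENNReal.ofReal (K * s^(r-2)) with hT
  have hmeasζ : Measurable fun z : ℂ => ENNReal.ofReal (H (ζ - z)) :=
    (hHmeas.comp (measurable_const.sub measurable_id)).ennreal_ofReal
  calc (∫⁻ z in ball (0:ℂ) 1,
          ENNReal.ofReal ((1 - ‖z‖ ^ 2) ^ r / (‖ζ - z‖ ^ 2 * ‖η - z‖ ^ 2)))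
      ≤ ∫⁻ z in ball (0:ℂ) 1, ENNReal.ofReal (2^r * (H (ζ-z) + H (η-z))) :=
        setLIntegral_mono' measurableSet_ball hpt
    _ = ∫⁻ z in ball (0:ℂ) 1, ENNReal.ofReal (2^r) *
          (ENNReal.ofReal (H (ζ-z)) + ENNReal.ofReal (H (η-z))) := by
        refine lintegral_congr fun z => ?_
        rw [ENNReal.ofReal_mul (Real.rpow_nonneg (by norm_num) r),
          ENNReal.ofReal_add (hHnn _) (hHnn _)]
    _ = ENNReal.ofReal (2^r) * ((∫⁻ z in ball (0:ℂ) 1, ENNReal.ofReal (H (ζ-z)))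
          + ∫⁻ z in ball (0:ℂ) 1, ENNReal.ofReal (H (η-z))) := by
        rw [lintegral_const_mul _ (by exact (hmeasζ.add
          ((hHmeas.comp (measurable_const.sub measurable_id)).ennreal_ofReal))),
          lintegral_add_left hmeasζ]
    _ ≤ ENNReal.ofReal (2^r) * (T + T) :=
        mul_le_mul_right (add_le_add (hterm ζ hζ) (hterm η hη)) _
    _ = ENNReal.ofReal (2^r) * (2 * T) := by rw [two_mul]
    _ = ENNReal.ofReal (2 ^ r * (2 * (2 * π * (K * 2 ^ (2 - r)))) * d ^ (r - 2)) := by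
        have hsval : s ^ (r-2) = d ^ (r-2) * 2 ^ (2-r) := by
          rw [hs, Real.div_rpow hd0.le (by norm_num : (0:ℝ) ≤ 2), div_eq_mul_inv,
            ← Real.rpow_neg (by norm_num : (0:ℝ) ≤ 2), neg_sub]
        rw [hT, ← ENNReal.ofReal_mul (by positivity : (0:ℝ) ≤ 2*π),
          ← ENNReal.ofReal_ofNat 2, ← ENNReal.ofReal_mul (by norm_num : (0:ℝ) ≤ 2),
          ← ENNReal.ofReal_mul (Real.rpow_nonneg (by norm_num) r), hsval]
        congr 1
        ring
end
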